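/- The 5-dimensional complex algebra N⁵₁₃(λ), with basis e₁,...,e₅ and nonzero products e₁e₁ = e₂, e₁e₂ = e₃, e₁e₃ = e₄ - 2e₅, e₁e₄ = e₅, e₂e₁ = e₃ + e₄ + λe₅, e₂e₂ = e₄, e₂e₃ = e₅, e₃e₁ = e₄, e₃e₂ = e₅, e₄e₁ = e₅, is a one-generated nilpotent Novikov algebra for every λ ∈ ℂ. -/
import Mathlib


/-- The 5-dimensional algebra `N⁵₁₃(λ)` over ℂ, with basis `e₁,…,e₅` and
nonzero products `e₁e₁ = e₂`, `e₁e₂ = e₃`, `e₁e₃ = e₄ - 2e₅`, `e₁e₄ = e₅`,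
`e₂e₁ = e₃ + e₄ + λe₅`, `e₂e₂ = e₄`, `e₂e₃ = e₅`, `e₃e₁ = e₄`, `e₃e₂ = e₅`,
`e₄e₁ = e₅`. -/
noncomputable def mulN513 (l : ℂ) (a b : Fin 5 → ℂ) : Fin 5 → ℂ :=
  ![0, a 0 * b 0,
    a 0 * b 1 + a 1 * b 0,
    a 0 * b 2 + a 1 * b 0 + a 1 * b 1 + a 2 * b 0,
    -2 * (a 0 * b 2) + a 0 * b 3 + l * (a 1 * b 0)
      + a 1 * b 2 + a 2 * b 1 + a 3 * b 0]

/-- Span of products of two submodules of `N⁵₁₃(λ)`. -/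
noncomputable def mulSpanN513 (l : ℂ) (S T : Submodule ℂ (Fin 5 → ℂ)) :
    Submodule ℂ (Fin 5 → ℂ) :=
  Submodule.span ℂ {z | ∃ x ∈ S, ∃ y ∈ T, z = mulN513 l x y}

/-- Filtration submodule: coordinates `m` with `m + 2 ≤ k` vanish. -/
noncomputable def VkN513 (k : ℕ) : Submodule ℂ (Fin 5 → ℂ) where
  carrier := {a | ∀ m : Fin 5, (m : ℕ) + 2 ≤ k → a m = 0}
  add_mem' := by intro a b ha hb m hm; simp [ha m hm, hb m hm]
  zero_mem' := by intro m hm; rfl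
  smul_mem' := by intro c a ha m hm; simp [ha m hm]

lemma mulN513_mem_Vk (l : ℂ) {i j : ℕ} (hi : 1 ≤ i) (hj : 1 ≤ j)
    {x y : Fin 5 → ℂ} (hx : x ∈ VkN513 i) (hy : y ∈ VkN513 j) :
    mulN513 l x y ∈ VkN513 (i + j) := by
  have hz : ∀ p q : Fin 5, (p : ℕ) + (q : ℕ) + 3 ≤ i + j → x p * y q = 0 := by
    intro p q hpq
    by_cases hp : (p : ℕ) + 2 ≤ i
    · rw [hx p hp, zero_mul]
    · rw [hy q (by omega), mul_zero]
  intro m hm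
  fin_cases m <;> simp [mulN513] at hm ⊢
  · exact mul_eq_zero.mp (hz 0 0 (by omega))
  · rw [hz 0 1 (by omega), hz 1 0 (by omega)]; ring
  · rw [hz 0 2 (by omega), hz 1 0 (by omega), hz 1 1 (by omega),
      hz 2 0 (by omega)]; ring
  · rw [hz 0 2 (by omega), hz 0 3 (by omega), hz 1 0 (by omega),
      hz 1 2 (by omega), hz 2 1 (by omega),
      hz 3 0 (by omega)]; ring

noncomputable def PfunN513 (l : ℂ) : ℕ → Submodule ℂ (Fin 5 → ℂ)
  | 0 => ⊥
  | 1 => ⊤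
  | (k + 2) =>
      ⨆ (i : ℕ) (j : ℕ) (_ : 1 ≤ i) (_ : 1 ≤ j) (_ : i + j = k + 2),
        mulSpanN513 l (PfunN513 l i) (PfunN513 l j)
  decreasing_by all_goals omega

lemma Pfun_le_Vk (l : ℂ) : ∀ k : ℕ, 1 ≤ k → PfunN513 l k ≤ VkN513 k := by
  intro k
  induction k using Nat.strong_induction_on with
  | _ k ih =>
    match k with
    | 0 => omega
    | 1 =>
        intro _ a _ m hm
        exact absurd hm (by omega)
    | (k + 2) =>
        intro _
        rw [PfunN513]
        refine iSup_le fun i => iSup_le fun j => iSup_le fun hi =>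
          iSup_le fun hj => iSup_le fun hij => ?_
        refine Submodule.span_le.mpr ?_
        rintro z ⟨x, hx, y, hy, rfl⟩
        have hxi : x ∈ VkN513 i := ih i (by omega) hi hx
        have hyj : y ∈ VkN513 j := ih j (by omega) hj hy
        have := mulN513_mem_Vk l hi hj hxi hyj
        rwa [hij] at this


/-- For every `λ ∈ ℂ`, `N⁵₁₃(λ)` is a one-generated nilpotent Novikov
algebra. -/
theorem N513_one_generated_nilpotent_novikov (l : ℂ) :
    (∀ x y z : Fin 5 → ℂ,
      mulN513 l (mulN513 l x y) z = mulN513 l (mulN513 l x z) y ∧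
      mulN513 l (mulN513 l x y) z - mulN513 l x (mulN513 l y z)
        = mulN513 l (mulN513 l y x) z - mulN513 l y (mulN513 l x z)) ∧
    (∃ P : ℕ → Submodule ℂ (Fin 5 → ℂ),
      P 1 = ⊤ ∧
      (∀ k : ℕ, 1 ≤ k → P (k + 1) =
        ⨆ (i : ℕ) (j : ℕ) (_ : 1 ≤ i) (_ : 1 ≤ j) (_ : i + j = k + 1),
          mulSpanN513 l (P i) (P j)) ∧
      ∃ n : ℕ, 1 ≤ n ∧ P n = ⊥) ∧
    (∃ g : Fin 5 → ℂ, ∀ S : Submodule ℂ (Fin 5 → ℂ), g ∈ S →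
      (∀ x ∈ S, ∀ y ∈ S, mulN513 l x y ∈ S) → S = ⊤) := by
  refine ⟨?_, ?_, ?_⟩
  · intro x y z
    constructor <;> (funext m; fin_cases m <;> simp [mulN513] <;> ring)
  · refine ⟨PfunN513 l, by rw [PfunN513], ?_, 6, by omega, ?_⟩
    · intro k hk
      obtain ⟨m, rfl⟩ : ∃ m, k = m + 1 := ⟨k - 1, by omega⟩
      rw [PfunN513]
    · refine le_bot_iff.mp ?_
      intro a ha
      have h := Pfun_le_Vk l 6 (by omega) ha
      have : a = 0 := by
        funext m
        exact h m (by omega)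
      simpa [this]
  · refine ⟨![1, 0, 0, 0, 0], fun S hg hmul => ?_⟩
    set g : Fin 5 → ℂ := ![1, 0, 0, 0, 0] with hgdef
    have h2 : mulN513 l g g ∈ S := hmul g hg g hg
    have h3 : mulN513 l g (mulN513 l g g) ∈ S := hmul g hg _ h2
    have h4 : mulN513 l g (mulN513 l g (mulN513 l g g)) ∈ S := hmul g hg _ h3
    have h5 : mulN513 l g (mulN513 l g (mulN513 l g (mulN513 l g g))) ∈ S :=
      hmul g hg _ h4
    have e1 : (Pi.single (0 : Fin 5) (1 : ℂ)) ∈ S := by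
      have : (Pi.single (0 : Fin 5) (1 : ℂ)) = g := by
        funext m; fin_cases m <;> simp [hgdef]
      rwa [this]
    have e2 : (Pi.single (1 : Fin 5) (1 : ℂ)) ∈ S := by
      have : (Pi.single (1 : Fin 5) (1 : ℂ)) = mulN513 l g g := by
        funext m; fin_cases m <;> simp [hgdef, mulN513]
      rwa [this]
    have e3 : (Pi.single (2 : Fin 5) (1 : ℂ)) ∈ S := by
      have : (Pi.single (2 : Fin 5) (1 : ℂ)) = mulN513 l g (mulN513 l g g) := by
        funext m; fin_cases m <;> simp [hgdef, mulN513]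
      rwa [this]
    have e5 : (Pi.single (4 : Fin 5) (1 : ℂ)) ∈ S := by
      have : (Pi.single (4 : Fin 5) (1 : ℂ))
          = mulN513 l g (mulN513 l g (mulN513 l g (mulN513 l g g))) := by
        funext m; fin_cases m <;> simp [hgdef, mulN513]
      rwa [this]
    have e4 : (Pi.single (3 : Fin 5) (1 : ℂ)) ∈ S := by
      have : (Pi.single (3 : Fin 5) (1 : ℂ))
          = mulN513 l g (mulN513 l g (mulN513 l g g))
            + (2 : ℂ) • (Pi.single (4 : Fin 5) (1 : ℂ) : Fin 5 → ℂ) := by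
        funext m; fin_cases m <;> simp [hgdef, mulN513]
      rw [this]
      exact S.add_mem h4 (S.smul_mem _ e5)
    have hbasis : ∀ i : Fin 5, (Pi.single i (1 : ℂ)) ∈ S := by
      intro i; fin_cases i <;> assumption
    rw [eq_top_iff]
    intro v _
    have hv : v = ∑ i : Fin 5, v i • (Pi.single i (1 : ℂ) : Fin 5 → ℂ) := by
      funext m
      simp [Finset.sum_apply, Pi.single_apply]
    rw [hv]
    exact Submodule.sum_mem S fun i _ => S.smul_mem _ (hbasis i)
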